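/- arXiv:0903.4727 — 5 statements merged into one kernel-verified Lean document; each statement's English description precedes it below -/
import Mathlib

section
/- For all z, w ∈ ℂⁿ, the Gaussian integral of the product of two exponential (coherent-state) functionals reproduces the exponential of the pairing: π^{−n} ∫_{ℂⁿ} e^{−ζ*ζ} e^{z*ζ} e^{ζ*w} dζ = e^{z*w}. -/
open MeasureTheory
open scoped ComplexConjugate Real

lemma gauss_one_dim (a b : ℂ) :
    ∫ ζ : ℂ, Complex.exp (-((Complex.normSq ζ : ℝ) : ℂ)) * Complex.exp (a * ζ) *
      Complex.exp (conj ζ * b) = (π : ℂ) * Complex.exp (a * b) := by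
  rw [← (Complex.volume_preserving_equiv_real_prod.symm
      Complex.measurableEquivRealProd).integral_comp']
  have h : ∀ p : ℝ × ℝ,
      (fun ζ : ℂ => Complex.exp (-((Complex.normSq ζ : ℝ) : ℂ)) * Complex.exp (a * ζ) *
        Complex.exp (conj ζ * b)) (Complex.measurableEquivRealProd.symm p)
      = Complex.exp ((-1) * p.1 ^ 2 + (a + b) * p.1 + 0) *
        Complex.exp ((-1) * p.2 ^ 2 + ((a - b) * Complex.I) * p.2 + 0) := by
    intro p
    have hp : (Complex.measurableEquivRealProd.symm p : ℂ) = (p.1 : ℂ) + (p.2 : ℂ) * Complex.I := by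
      apply Complex.ext <;> simp
    simp only [hp]
    rw [← Complex.exp_add, ← Complex.exp_add, ← Complex.exp_add]
    congr 1
    have hn : ((Complex.normSq ((p.1 : ℂ) + (p.2 : ℂ) * Complex.I) : ℝ) : ℂ)
        = (p.1 : ℂ) ^ 2 + (p.2 : ℂ) ^ 2 := by
      rw [← Complex.mk_eq_add_mul_I, Complex.normSq_mk]
      push_cast; ring
    rw [hn]
    have hc : conj ((p.1 : ℂ) + (p.2 : ℂ) * Complex.I) = (p.1 : ℂ) - (p.2 : ℂ) * Complex.I := by
      simp [map_add, map_mul, Complex.conj_I, Complex.conj_ofReal]; ring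
    rw [hc]; ring
  simp_rw [h]
  rw [MeasureTheory.Measure.volume_eq_prod ℝ ℝ]
  rw [MeasureTheory.integral_prod_mul
    (f := fun x : ℝ => Complex.exp ((-1) * (x:ℂ) ^ 2 + (a + b) * x + 0))
    (g := fun y : ℝ => Complex.exp ((-1) * (y:ℂ) ^ 2 + ((a - b) * Complex.I) * y + 0))]
  rw [integral_cexp_quadratic (by norm_num) (a + b) 0,
      integral_cexp_quadratic (by norm_num) ((a - b) * Complex.I) 0]
  rw [neg_neg, div_one]
  have hpi : ((π : ℂ)) ^ (1 / 2 : ℂ) * ((π : ℂ)) ^ (1 / 2 : ℂ) = (π : ℂ) := by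
    rw [← Complex.cpow_add _ _ (by exact_mod_cast Real.pi_ne_zero)]
    norm_num
  rw [mul_mul_mul_comm, hpi, ← Complex.exp_add]
  congr 1
  have hI : ((a - b) * Complex.I) ^ 2 = -((a - b) ^ 2) := by
    rw [mul_pow, Complex.I_sq]; ring
  rw [hI]
  ring

/-- for all `z, w ∈ ℂⁿ`,
`π^{−n} ∫_{ℂⁿ} e^{−ζ*ζ} e^{z*ζ} e^{ζ*w} dζ = e^{z*w}`, where `z*w = Σᵢ conj(zᵢ) wᵢ`
and `ζ*ζ = ‖ζ‖² = Σᵢ |ζᵢ|²`. -/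
theorem gaussian_reproducing_exponentials {n : ℕ} (z w : Fin n → ℂ) :
    ((π : ℂ) ^ n)⁻¹ *
        ∫ ζ : Fin n → ℂ,
          Complex.exp (-((∑ i, Complex.normSq (ζ i) : ℝ) : ℂ)) *
            Complex.exp (∑ i, conj (z i) * ζ i) * Complex.exp (∑ i, conj (ζ i) * w i) =
      Complex.exp (∑ i, conj (z i) * w i) := by
  have key : ∀ ζ : Fin n → ℂ,
      Complex.exp (-((∑ i, Complex.normSq (ζ i) : ℝ) : ℂ)) *
        Complex.exp (∑ i, conj (z i) * ζ i) * Complex.exp (∑ i, conj (ζ i) * w i)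
      = ∏ i, (Complex.exp (-((Complex.normSq (ζ i) : ℝ) : ℂ)) *
          Complex.exp (conj (z i) * ζ i) * Complex.exp (conj (ζ i) * w i)) := by
    intro ζ
    rw [Finset.prod_mul_distrib, Finset.prod_mul_distrib, ← Complex.exp_sum,
      ← Complex.exp_sum, ← Complex.exp_sum]
    congr 2
    push_cast [Finset.sum_neg_distrib]
    rfl
  simp_rw [key]
  rw [MeasureTheory.volume_pi, MeasureTheory.integral_fintype_prod_eq_prod
    (f := fun i (ζ : ℂ) => Complex.exp (-((Complex.normSq ζ : ℝ) : ℂ)) *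
      Complex.exp (conj (z i) * ζ) * Complex.exp (conj ζ * w i))]
  simp_rw [gauss_one_dim]
  rw [Finset.prod_mul_distrib, Finset.prod_const, Finset.card_univ, Fintype.card_fin,
    ← Complex.exp_sum, ← mul_assoc, inv_mul_cancel₀ (by
      exact pow_ne_zero _ (by exact_mod_cast Real.pi_ne_zero)), one_mul]
end

section
/- Let 𝔤 be a finite-dimensional real Lie algebra with an ad-invariant inner product ⟨·,·⟩ (i.e. ⟨[x,y],z⟩ = −⟨y,[x,z]⟩). Let a = (a_k)_{k=1,2,3} with a_k : ℝ³ → 𝔤 continuous, and let u : ℝ³ → 𝔤 be continuously differentiable with compact support. If (grad_a u)_k = ∂_k u − [a_k, u] vanishes identically for k = 1,2,3, then u = 0. -/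
open scoped RealInnerProductSpace

/-- for a finite-dimensional real Lie algebra `𝔤` (bracket `L`, with
antisymmetry and Jacobi identity) with ad-invariant inner product, a continuous family
`a = (a_k)` and a continuously differentiable compactly supported `u : ℝ³ → 𝔤`, if the
gauge gradient `(grad_a u)_k = ∂_k u − [a_k, u]` vanishes identically, then `u = 0`. -/
theorem gauge_grad_eq_zero_imp_eq_zero
    {𝔤 : Type*} [NormedAddCommGroup 𝔤] [InnerProductSpace ℝ 𝔤] [FiniteDimensional ℝ 𝔤]
    (L : 𝔤 →ₗ[ℝ] 𝔤 →ₗ[ℝ] 𝔤)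
    (hanti : ∀ x y : 𝔤, L x y = -L y x)
    (hjacobi : ∀ x y z : 𝔤, L x (L y z) = L (L x y) z + L y (L x z))
    (hadInv : ∀ x y z : 𝔤, ⟪L x y, z⟫ = -⟪y, L x z⟫)
    (a : Fin 3 → (Fin 3 → ℝ) → 𝔤) (ha : ∀ k, Continuous (a k))
    (u : (Fin 3 → ℝ) → 𝔤) (hu : ContDiff ℝ 1 u) (husupp : HasCompactSupport u)
    (hgrad : ∀ (k : Fin 3) (x : Fin 3 → ℝ),
      fderiv ℝ u x (Pi.single k 1) - L (a k x) (u x) = 0) :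
    u = 0 := by
  have hud : Differentiable ℝ u := hu.differentiable one_ne_zero
  have hzero : ∀ (w y : 𝔤), ⟪L w y, y⟫ = 0 := by
    intro w y
    have h1 := hadInv w y y
    have h2 := real_inner_comm (L w y) y
    linarith
  set f : (Fin 3 → ℝ) → ℝ := fun x => ⟪u x, u x⟫ with hf
  have hfd : Differentiable ℝ f := hud.inner ℝ hud
  have key : ∀ x, fderiv ℝ f x = 0 := by
    intro x
    have hdir : ∀ k : Fin 3, fderiv ℝ f x (Pi.single k 1) = 0 := by
      intro k
      have hder : fderiv ℝ u x (Pi.single k 1) = L (a k x) (u x) :=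
        sub_eq_zero.mp (hgrad k x)
      rw [hf, fderiv_inner_apply ℝ (hud x) (hud x), hder, hzero,
        real_inner_comm, hzero, add_zero]
    ext v
    have hv : v = ∑ k : Fin 3, v k • (Pi.single k 1 : Fin 3 → ℝ) := by
      ext j
      simp [Finset.sum_apply, Pi.single_apply]
    rw [ContinuousLinearMap.zero_apply]
    calc fderiv ℝ f x v = fderiv ℝ f x (∑ k : Fin 3, v k • (Pi.single k 1 : Fin 3 → ℝ)) := by
          rw [← hv]
      _ = ∑ k : Fin 3, v k • fderiv ℝ f x (Pi.single k (1 : ℝ)) := by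
          rw [map_sum]; simp
      _ = 0 := by simp [hdir]
  have hconst : ∀ x y, f x = f y := fun x y => is_const_of_fderiv_eq_zero hfd key x y
  obtain ⟨x₀, hx₀⟩ : ∃ x, x ∉ tsupport u := by
    by_contra h
    push_neg at h
    exact husupp.ne_univ (Set.eq_univ_of_forall h)
  have hu0 : u x₀ = 0 := image_eq_zero_of_notMem_tsupport hx₀
  funext x
  have : f x = 0 := by
    rw [hconst x x₀, hf]; simp [hu0]
  have := inner_self_eq_zero.mp this
  simpa using this
end

section
/- Let 𝔤 be a finite-dimensional real Lie algebra with an ad-invariant inner product ⟨·,·⟩ (i.e. ⟨[x,y],z⟩ = −⟨y,[x,z]⟩). Let a = (a_k)_{k=1,2,3} with a_k : ℝ³ → 𝔤 smooth, and let u : ℝ³ → 𝔤 be smooth with compact support. If the gauge Laplacian Δ_a u := div_a(grad_a u) vanishes identically, then u = 0. -/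
open scoped RealInnerProductSpace
open MeasureTheory Set

/-- for a finite-dimensional real Lie algebra `𝔤` (bracket `L`, with
antisymmetry and Jacobi identity) with ad-invariant inner product, a smooth family
`a = (a_k)` and a smooth compactly supported `u : ℝ³ → 𝔤`, if the gauge Laplacian
`Δ_a u = div_a (grad_a u) = Σ_k (∂_k (grad_a u)_k − [a_k, (grad_a u)_k])` vanishes
identically, then `u = 0`. -/
theorem gauge_laplacian_eq_zero_imp_eq_zero
    {𝔤 : Type*} [NormedAddCommGroup 𝔤] [InnerProductSpace ℝ 𝔤] [FiniteDimensional ℝ 𝔤]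
    (L : 𝔤 →ₗ[ℝ] 𝔤 →ₗ[ℝ] 𝔤)
    (hanti : ∀ x y : 𝔤, L x y = -L y x)
    (hjacobi : ∀ x y z : 𝔤, L x (L y z) = L (L x y) z + L y (L x z))
    (hadInv : ∀ x y z : 𝔤, ⟪L x y, z⟫ = -⟪y, L x z⟫)
    (a : Fin 3 → (Fin 3 → ℝ) → 𝔤) (ha : ∀ k, ContDiff ℝ (⊤ : ℕ∞) (a k))
    (u : (Fin 3 → ℝ) → 𝔤) (hu : ContDiff ℝ (⊤ : ℕ∞) u) (husupp : HasCompactSupport u)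
    (hlap : ∀ x : Fin 3 → ℝ,
      ∑ k : Fin 3,
        (fderiv ℝ (fun y => fderiv ℝ u y (Pi.single k 1) - L (a k y) (u y)) x
            (Pi.single k 1) -
          L (a k x) (fderiv ℝ u x (Pi.single k 1) - L (a k x) (u x))) = 0) :
    u = 0 := by
  classical
  -- continuity of the bracket
  have hB : IsBoundedBilinearMap ℝ (fun p : 𝔤 × 𝔤 => L p.1 p.2) := by
    let Lhat : 𝔤 →ₗ[ℝ] 𝔤 →L[ℝ] 𝔤 :=
      { toFun := fun x => LinearMap.toContinuousLinearMap (L x)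
        map_add' := fun x y => by ext z; simp
        map_smul' := fun c x => by ext z; simp }
    exact (LinearMap.toContinuousLinearMap Lhat).isBoundedBilinearMap
  have hLsmooth : ∀ (f g : (Fin 3 → ℝ) → 𝔤), ContDiff ℝ (⊤ : ℕ∞) f → ContDiff ℝ (⊤ : ℕ∞) g →
      ContDiff ℝ (⊤ : ℕ∞) (fun x => L (f x) (g x)) := fun f g hf hg =>
    hB.contDiff.comp (hf.prodMk hg)
  have hudiff : Differentiable ℝ u := hu.differentiable (by simp)
  -- `v k` is the gauge gradient, made opaque to keep rewriting predictable
  obtain ⟨v, hv⟩ : ∃ v : Fin 3 → (Fin 3 → ℝ) → 𝔤,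
      v = fun k y => fderiv ℝ u y (Pi.single k 1) - L (a k y) (u y) := ⟨_, rfl⟩
  have hvsmooth : ∀ k, ContDiff ℝ (⊤ : ℕ∞) (v k) := by
    intro k
    rw [hv]
    exact ((hu.fderiv_right (m := (⊤ : ℕ∞)) (by simp)).clm_apply contDiff_const).sub
      (hLsmooth _ _ (ha k) hu)
  have hvdiff : ∀ k, Differentiable ℝ (v k) := fun k => (hvsmooth k).differentiable (by simp)
  obtain ⟨g, hg⟩ : ∃ g : Fin 3 → (Fin 3 → ℝ) → ℝ,
      g = fun k x => ⟪v k x, u x⟫ := ⟨_, rfl⟩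
  have hgsmooth : ∀ k, ContDiff ℝ (⊤ : ℕ∞) (g k) := by
    intro k; rw [hg]; exact (hvsmooth k).inner ℝ hu
  -- vanishing of `u` and `v` outside the support
  have hKc : IsCompact (tsupport u) := husupp
  have huzero : ∀ x ∉ tsupport u, u x = 0 := fun x hx => image_eq_zero_of_notMem_tsupport hx
  have hvzero : ∀ x ∉ tsupport u, ∀ k, v k x = 0 := by
    intro x hx k
    have hux : u =ᶠ[nhds x] 0 := notMem_tsupport_iff_eventuallyEq.mp hx
    have hfd : fderiv ℝ u x = 0 := by
      rw [hux.fderiv_eq]; exact fderiv_const_apply 0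
    rw [hv]
    simp [hfd, huzero x hx]
  -- the pointwise key identity
  have key : ∀ x, ∑ k : Fin 3, fderiv ℝ (g k) x (Pi.single k 1)
      = ∑ k : Fin 3, ⟪v k x, v k x⟫ := by
    intro x
    have h1 : ∀ k : Fin 3, fderiv ℝ (g k) x (Pi.single k 1)
        = ⟪v k x, fderiv ℝ u x (Pi.single k 1)⟫
          + ⟪fderiv ℝ (v k) x (Pi.single k 1), u x⟫ := by
      intro k
      rw [hg]
      exact fderiv_inner_apply ℝ (hvdiff k x) (hudiff x) _
    have h2 : ∀ k : Fin 3, fderiv ℝ u x (Pi.single k 1) = v k x + L (a k x) (u x) := by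
      intro k; rw [hv]; simp
    have h3 : ∑ k : Fin 3, (fderiv ℝ (v k) x (Pi.single k 1) - L (a k x) (v k x)) = 0 := by
      rw [hv]
      exact hlap x
    have h4 : ∀ k : Fin 3, fderiv ℝ (g k) x (Pi.single k 1)
        = ⟪fderiv ℝ (v k) x (Pi.single k 1) - L (a k x) (v k x), u x⟫ + ⟪v k x, v k x⟫ := by
      intro k
      rw [h1 k, h2 k, inner_add_right, inner_sub_left]
      have hai := hadInv (a k x) (v k x) (u x)
      linarith
    calc ∑ k : Fin 3, fderiv ℝ (g k) x (Pi.single k 1)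
        = ∑ k : Fin 3, (⟪fderiv ℝ (v k) x (Pi.single k 1) - L (a k x) (v k x), u x⟫
            + ⟪v k x, v k x⟫) :=
          Finset.sum_congr rfl fun k _ => h4 k
      _ = ⟪∑ k : Fin 3, (fderiv ℝ (v k) x (Pi.single k 1) - L (a k x) (v k x)), u x⟫
            + ∑ k : Fin 3, ⟪v k x, v k x⟫ := by
          rw [Finset.sum_add_distrib, sum_inner]
      _ = ∑ k : Fin 3, ⟪v k x, v k x⟫ := by
          rw [h3]; simp
  -- choose a big box
  obtain ⟨R0, hR0⟩ := hKc.isBounded.subset_closedBall 0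
  set R : ℝ := max R0 0 with hRdef
  have hR : tsupport u ⊆ Metric.closedBall 0 R :=
    hR0.trans (Metric.closedBall_subset_closedBall (le_max_left _ _))
  have hRnn : (0:ℝ) ≤ R := le_max_right _ _
  have hout : ∀ y : Fin 3 → ℝ, R < ‖y‖ → y ∉ tsupport u := by
    intro y hy hmem
    have := hR hmem
    rw [Metric.mem_closedBall, dist_zero_right] at this
    linarith
  have hgout : ∀ (i : Fin 3) (y : Fin 3 → ℝ), R < ‖y‖ → g i y = 0 := by
    intro i y hy
    rw [hg]
    simp only []
    rw [huzero y (hout y hy), inner_zero_right]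
  set aa : Fin 3 → ℝ := fun _ => -(R + 1) with haa
  set bb : Fin 3 → ℝ := fun _ => (R + 1) with hbb
  have hab : aa ≤ bb := fun i => by simp only [haa, hbb]; linarith
  -- divergence theorem
  have hdiv := MeasureTheory.integral_divergence_of_hasFDerivAt_off_countable'
    (n := 2) aa bb hab g (fun k x => fderiv ℝ (g k) x) ∅ Set.countable_empty
    (fun i => ((hgsmooth i).continuous).continuousOn)
    (fun x _ i => ((hgsmooth i).differentiable (by simp) x).hasFDerivAt)
    (by
      apply ContinuousOn.integrableOn_compact isCompact_Icc
      apply Continuous.continuousOn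
      apply continuous_finset_sum
      intro i _
      show Continuous fun x => fderiv ℝ (g i) x (Pi.single i 1)
      exact (((hgsmooth i).fderiv_right (m := (⊤ : ℕ∞)) (by simp)).continuous).clm_apply continuous_const)
  have hdiv0 : (∫ x in Icc aa bb, ∑ i : Fin 3, fderiv ℝ (g i) x (Pi.single i 1)) = 0 := by
    rw [hdiv]
    apply Finset.sum_eq_zero
    intro i _
    have h1 : ∀ z, g i (i.insertNth (bb i) z) = 0 := by
      intro z
      apply hgout
      have h2 : ‖(i.insertNth (bb i) z : Fin 3 → ℝ) i‖ ≤ ‖(i.insertNth (bb i) z : Fin 3 → ℝ)‖ :=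
        norm_le_pi_norm _ i
      rw [Fin.insertNth_apply_same, Real.norm_eq_abs] at h2
      have : |bb i| = R + 1 := by
        simp only [hbb]; exact abs_of_nonneg (by linarith)
      rw [this] at h2
      linarith
    have h2 : ∀ z, g i (i.insertNth (aa i) z) = 0 := by
      intro z
      apply hgout
      have h2 : ‖(i.insertNth (aa i) z : Fin 3 → ℝ) i‖ ≤ ‖(i.insertNth (aa i) z : Fin 3 → ℝ)‖ :=
        norm_le_pi_norm _ i
      rw [Fin.insertNth_apply_same, Real.norm_eq_abs] at h2
      have : |aa i| = R + 1 := by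
        simp only [haa]; rw [abs_neg]; exact abs_of_nonneg (by linarith)
      rw [this] at h2
      linarith
    simp only [h1, h2, integral_zero, sub_zero]
  -- nonnegative integrand with zero integral
  obtain ⟨h, hhdef⟩ : ∃ h : (Fin 3 → ℝ) → ℝ,
      h = fun x => ∑ k : Fin 3, ⟪v k x, v k x⟫ := ⟨_, rfl⟩
  have hhcont : Continuous h := by
    rw [hhdef]
    apply continuous_finset_sum
    intro k _
    exact ((hvsmooth k).inner ℝ (hvsmooth k)).continuous
  have hhzero : ∀ x ∉ tsupport u, h x = 0 := by
    intro x hx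
    rw [hhdef]
    exact Finset.sum_eq_zero fun k _ => by rw [hvzero x hx k, inner_zero_left]
  have hhsupp : HasCompactSupport h :=
    HasCompactSupport.intro hKc hhzero
  have hhnonneg : ∀ x, 0 ≤ h x := by
    intro x; rw [hhdef]
    exact Finset.sum_nonneg fun k _ => real_inner_self_nonneg
  have hbox : ∀ x : Fin 3 → ℝ, x ∉ Icc aa bb → h x = 0 := by
    intro x hx
    apply hhzero
    apply hout
    rw [Set.mem_Icc] at hx
    by_contra hle
    push_neg at hle
    apply hx
    constructor
    · intro i
      have h2 : ‖x i‖ ≤ ‖x‖ := norm_le_pi_norm _ i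
      rw [Real.norm_eq_abs, abs_le] at h2
      simp only [haa]
      linarith [h2.1]
    · intro i
      have h2 : ‖x i‖ ≤ ‖x‖ := norm_le_pi_norm _ i
      rw [Real.norm_eq_abs, abs_le] at h2
      simp only [hbb]
      linarith [h2.2]
  have hint : (∫ x, h x) = 0 := by
    rw [← setIntegral_eq_integral_of_forall_compl_eq_zero (s := Icc aa bb) (fun x hx => hbox x hx)]
    rw [← hdiv0]
    apply setIntegral_congr_fun measurableSet_Icc
    intro x _
    rw [hhdef]
    exact (key x).symm
  have hinteg : Integrable h := hhcont.integrable_of_hasCompactSupport hhsupp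
  have hzero : h = 0 := by
    have := (integral_eq_zero_iff_of_nonneg hhnonneg hinteg).mp hint
    exact (hhcont.ae_eq_iff_eq volume continuous_zero).mp this
  have hv0 : ∀ x k, v k x = 0 := by
    intro x k
    have hx : ∑ k : Fin 3, ⟪v k x, v k x⟫ = 0 := by
      have : h x = 0 := by rw [hzero]; rfl
      rwa [hhdef] at this
    have := (Finset.sum_eq_zero_iff_of_nonneg
      (fun k _ => (real_inner_self_nonneg : (0:ℝ) ≤ ⟪v k x, v k x⟫))).mp hx k (Finset.mem_univ k)
    exact inner_self_eq_zero.mp this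
  -- now `⟪u, u⟫` has zero derivative
  have hfdiff : Differentiable ℝ (fun x => (⟪u x, u x⟫ : ℝ)) := (hu.inner ℝ hu).differentiable (by simp)
  have hinner0 : ∀ x (k : Fin 3), ⟪fderiv ℝ u x (Pi.single k 1), u x⟫ = 0 := by
    intro x k
    have h2 : fderiv ℝ u x (Pi.single k 1) = L (a k x) (u x) := by
      have h3 := hv0 x k
      rw [hv] at h3
      simpa [sub_eq_zero] using h3
    rw [h2]
    have hai := hadInv (a k x) (u x) (u x)
    have hsym : ⟪u x, L (a k x) (u x)⟫ = ⟪L (a k x) (u x), u x⟫ := real_inner_comm _ _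
    linarith
  have hfz : ∀ x, fderiv ℝ (fun x => (⟪u x, u x⟫ : ℝ)) x = 0 := by
    intro x
    ext w
    rw [ContinuousLinearMap.zero_apply]
    rw [fderiv_inner_apply ℝ (hudiff x) (hudiff x) w]
    have hw : w = ∑ k : Fin 3, w k • (Pi.single k 1 : Fin 3 → ℝ) := by
      ext j
      simp [Pi.single_apply]
    have hfw : fderiv ℝ u x w = ∑ k : Fin 3, w k • fderiv ℝ u x (Pi.single k 1) := by
      conv_lhs => rw [hw]
      rw [map_sum]
      simp
    rw [hfw, sum_inner, inner_sum]
    have h1 : ∀ k : Fin 3, ⟪w k • fderiv ℝ u x (Pi.single k 1), u x⟫ = 0 := by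
      intro k
      rw [real_inner_smul_left, hinner0 x k, mul_zero]
    have h2 : ∀ k : Fin 3, ⟪u x, w k • fderiv ℝ u x (Pi.single k 1)⟫ = 0 := by
      intro k
      rw [real_inner_smul_right, real_inner_comm, hinner0 x k, mul_zero]
    rw [Finset.sum_congr rfl (fun k _ => h1 k), Finset.sum_congr rfl (fun k _ => h2 k)]
    simp
  -- conclude
  funext x
  have hconst := is_const_of_fderiv_eq_zero hfdiff hfz x (fun _ => R + 1)
  have hyout : (fun _ => R + 1 : Fin 3 → ℝ) ∉ tsupport u := by
    apply hout
    have h2 : ‖(fun _ => R + 1 : Fin 3 → ℝ) 0‖ ≤ ‖(fun _ => R + 1 : Fin 3 → ℝ)‖ :=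
      norm_le_pi_norm (fun _ => R + 1 : Fin 3 → ℝ) (0 : Fin 3)
    rw [Real.norm_eq_abs, abs_of_nonneg (by linarith : (0:ℝ) ≤ R + 1)] at h2
    linarith
  have hfy : (⟪u (fun _ => R + 1), u (fun _ => R + 1)⟫ : ℝ) = 0 := by
    rw [huzero _ hyout, inner_zero_left]
  have hx0 : (⟪u x, u x⟫ : ℝ) = 0 := by rw [hconst, hfy]
  simpa using inner_self_eq_zero.mp hx0
end

section
/- Let a = (a_k)_{k=1,2,3} and u be smooth compactly supported maps from ℝ³ into the skew-symmetric real n×n matrices, and for t ∈ ℝ let g_t(x) = exp(t·u(x)) (matrix exponential). Then the first variation of the squared L² norm of the gauge-transformed connection along the gauge orbit is d/dt |_{t=0} ∫_{ℝ³} Σ_{k=1}^3 ⟨ a^{g_t}_k(x), a^{g_t}_k(x) ⟩ dx = 2 ∫_{ℝ³} ⟨ Σ_{k=1}^3 (∂_k a_k)(x), u(x) ⟩ dx, where a^{g}_k(x) = g(x) a_k(x) g(x)⁻¹ − (∂_k g)(x) g(x)⁻¹ and ⟨X,Y⟩ = Trace(Xᵀ Y). -/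
open MeasureTheory
open scoped Matrix

attribute [local instance] Matrix.normedAddCommGroup Matrix.normedSpace

/-- The `k`-th partial derivative of a matrix-valued function on `ℝ³`. -/
noncomputable def partialDerivMat {n : ℕ} (k : Fin 3)
    (f : (Fin 3 → ℝ) → Matrix (Fin n) (Fin n) ℝ) (x : Fin 3 → ℝ) :
    Matrix (Fin n) (Fin n) ℝ :=
  fderiv ℝ f x (Pi.single k 1)

/-- The gauge transform `a^g_k(x) = g(x) a_k(x) g(x)⁻¹ − (∂_k g)(x) g(x)⁻¹`. -/
noncomputable def gaugeTransform {n : ℕ}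
    (g : (Fin 3 → ℝ) → Matrix (Fin n) (Fin n) ℝ)
    (a : Fin 3 → (Fin 3 → ℝ) → Matrix (Fin n) (Fin n) ℝ)
    (k : Fin 3) (x : Fin 3 → ℝ) : Matrix (Fin n) (Fin n) ℝ :=
  g x * a k x * (g x)⁻¹ - partialDerivMat k g x * (g x)⁻¹

/-- The ad-invariant inner product `⟨X, Y⟩ = Trace(Xᵀ Y)` on real matrices. -/
noncomputable def matInner {n : ℕ} (X Y : Matrix (Fin n) (Fin n) ℝ) : ℝ :=
  Matrix.trace (Xᵀ * Y)


open scoped Nat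

section AuxiliaryGauge

variable {n : ℕ}

local instance matTopInst {m : ℕ} : TopologicalSpace (Matrix (Fin m) (Fin m) ℝ) :=
  @UniformSpace.toTopologicalSpace _ (@PseudoMetricSpace.toUniformSpace _
    (@SeminormedAddCommGroup.toPseudoMetricSpace _
      (@NormedAddCommGroup.toSeminormedAddCommGroup _ Matrix.normedAddCommGroup)))

local instance matTopRing {m : ℕ} : IsTopologicalRing (Matrix (Fin m) (Fin m) ℝ) :=
  Matrix.topologicalRing

/-- Identify matrices with continuous linear maps, as an algebra equivalence. -/
noncomputable def matCLE (n : ℕ) :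
    Matrix (Fin n) (Fin n) ℝ ≃ₐ[ℝ] ((Fin n → ℝ) →L[ℝ] (Fin n → ℝ)) :=
  AlgEquiv.ofLinearEquiv (Matrix.toLin'.trans LinearMap.toContinuousLinearMap)
    (by ext v; simp [Matrix.toLin'_one])
    (by intro X Y; ext v; simp [Matrix.toLin'_mul])

lemma matCLE_exp (A : Matrix (Fin n) (Fin n) ℝ) :
    NormedSpace.exp A = (matCLE n).symm (NormedSpace.exp (matCLE n A)) := by
  have hs : Summable fun k : ℕ => (k !⁻¹ : ℝ) • (matCLE n A) ^ k :=
    NormedSpace.expSeries_summable' _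
  have hc : Continuous ((matCLE n).symm :
      ((Fin n → ℝ) →L[ℝ] (Fin n → ℝ)) → Matrix (Fin n) (Fin n) ℝ) :=
    LinearMap.continuous_of_finiteDimensional ((matCLE n).symm.toLinearMap)
  rw [NormedSpace.exp_eq_tsum (𝕂 := ℝ), NormedSpace.exp_eq_tsum (𝕂 := ℝ)]
  simp only
  have hmap : (matCLE n).symm (∑' k : ℕ, (k ! : ℝ)⁻¹ • (matCLE n) A ^ k)
      = ∑' k : ℕ, (k ! : ℝ)⁻¹ • A ^ k := by
    have h2 := (LinearMap.toContinuousLinearMap ((matCLE n).symm.toLinearMap)).map_tsum hs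
    simpa [map_pow] using h2
  rw [hmap]


lemma matCLE_contDiff : ContDiff ℝ (⊤ : ℕ∞) ((matCLE n) : Matrix (Fin n) (Fin n) ℝ → _) :=
  ((matCLE n).toLinearEquiv.toContinuousLinearEquiv).contDiff (n := (⊤ : ℕ∞))

lemma matCLE_symm_contDiff :
    ContDiff ℝ (⊤ : ℕ∞) ((matCLE n).symm : ((Fin n → ℝ) →L[ℝ] (Fin n → ℝ)) → _) :=
  ((matCLE n).symm.toLinearEquiv.toContinuousLinearEquiv).contDiff (n := (⊤ : ℕ∞))

/-- The matrix exponential is `C^∞` (indeed `C^ω`). -/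
lemma contDiff_exp_mat : ContDiff ℝ (⊤ : ℕ∞) (NormedSpace.exp : Matrix (Fin n) (Fin n) ℝ → _) := by
  have h1 : ContDiff ℝ (⊤ : ℕ∞) (NormedSpace.exp : ((Fin n → ℝ) →L[ℝ] (Fin n → ℝ)) → _) :=
    contDiff_iff_contDiffAt.2 fun x => (NormedSpace.exp_analytic x).contDiffAt
  have : (NormedSpace.exp : Matrix (Fin n) (Fin n) ℝ → _)
      = fun A => (matCLE n).symm (NormedSpace.exp (matCLE n A)) := funext matCLE_exp
  rw [this]
  exact matCLE_symm_contDiff.comp (h1.comp matCLE_contDiff)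

/-- Derivative of `t ↦ exp (t • A)` for matrices. -/
lemma hasDerivAt_exp_smul_mat (A : Matrix (Fin n) (Fin n) ℝ) (t : ℝ) :
    HasDerivAt (fun s : ℝ => NormedSpace.exp (s • A))
      (NormedSpace.exp (t • A) * A) t := by
  have h := hasDerivAt_exp_smul_const (𝕂 := ℝ) (matCLE n A) t
  have hf := ((matCLE n).symm.toLinearEquiv.toContinuousLinearEquiv :
      ((Fin n → ℝ) →L[ℝ] (Fin n → ℝ)) →L[ℝ] Matrix (Fin n) (Fin n) ℝ).hasFDerivAt
      (x := NormedSpace.exp (t • matCLE n A))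
  have h2 := hf.comp_hasDerivAt t h
  have key : ∀ s : ℝ, (matCLE n).symm (NormedSpace.exp (s • matCLE n A))
      = NormedSpace.exp (s • A) := by
    intro s
    rw [matCLE_exp (s • A), _root_.map_smul]
  convert h2 using 2 with s
  · rfl
  · rfl
  · rfl
  · exact (key _).symm
  · show NormedSpace.exp (t • A) * A
        = (matCLE n).symm (NormedSpace.exp (t • matCLE n A) * matCLE n A)
    rw [map_mul, AlgEquiv.symm_apply_apply, key t]


/-- Matrix multiplication as a continuous bilinear map. -/
noncomputable def mulCLM (n : ℕ) : Matrix (Fin n) (Fin n) ℝ →L[ℝ]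
    Matrix (Fin n) (Fin n) ℝ →L[ℝ] Matrix (Fin n) (Fin n) ℝ :=
  LinearMap.toContinuousLinearMap
    ((LinearMap.toContinuousLinearMap).toLinearMap.comp
      (LinearMap.mk₂ ℝ (fun X Y : Matrix (Fin n) (Fin n) ℝ => X * Y)
        (fun a b c => add_mul a b c) (fun r a b => smul_mul_assoc r a b)
        (fun a b c => mul_add a b c) (fun r a b => mul_smul_comm r a b)))

@[simp] lemma mulCLM_apply (X Y : Matrix (Fin n) (Fin n) ℝ) : mulCLM n X Y = X * Y := rfl

/-- The Frobenius inner product as a continuous bilinear map. -/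
noncomputable def innerCLM (n : ℕ) : Matrix (Fin n) (Fin n) ℝ →L[ℝ]
    Matrix (Fin n) (Fin n) ℝ →L[ℝ] ℝ :=
  LinearMap.toContinuousLinearMap
    ((LinearMap.toContinuousLinearMap).toLinearMap.comp
      (LinearMap.mk₂ ℝ (fun X Y : Matrix (Fin n) (Fin n) ℝ => matInner X Y)
        (fun a b c => by simp [matInner, Matrix.add_mul])
        (fun r a b => by simp [matInner, Matrix.smul_mul])
        (fun a b c => by simp [matInner, Matrix.mul_add])
        (fun r a b => by simp [matInner, Matrix.mul_smul])))

@[simp] lemma innerCLM_apply (X Y : Matrix (Fin n) (Fin n) ℝ) : innerCLM n X Y = matInner X Y := rfl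

lemma contDiff_mul_mat : ContDiff ℝ (⊤ : ℕ∞)
    (fun p : Matrix (Fin n) (Fin n) ℝ × Matrix (Fin n) (Fin n) ℝ => p.1 * p.2) := by
  have := (mulCLM n).isBoundedBilinearMap.contDiff (n := (⊤ : ℕ∞))
  exact this

lemma contDiff_matInner : ContDiff ℝ (⊤ : ℕ∞)
    (fun p : Matrix (Fin n) (Fin n) ℝ × Matrix (Fin n) (Fin n) ℝ => matInner p.1 p.2) := by
  have := (innerCLM n).isBoundedBilinearMap.contDiff (n := (⊤ : ℕ∞))
  exact this

lemma ContDiff.matmul {E : Type*} [NormedAddCommGroup E] [NormedSpace ℝ E]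
    {f g : E → Matrix (Fin n) (Fin n) ℝ} (hf : ContDiff ℝ (⊤ : ℕ∞) f) (hg : ContDiff ℝ (⊤ : ℕ∞) g) :
    ContDiff ℝ (⊤ : ℕ∞) (fun x => f x * g x) :=
  contDiff_mul_mat.comp (hf.prodMk hg)

lemma ContDiff.matInner' {E : Type*} [NormedAddCommGroup E] [NormedSpace ℝ E]
    {f g : E → Matrix (Fin n) (Fin n) ℝ} (hf : ContDiff ℝ (⊤ : ℕ∞) f) (hg : ContDiff ℝ (⊤ : ℕ∞) g) :
    ContDiff ℝ (⊤ : ℕ∞) (fun x => matInner (f x) (g x)) :=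
  contDiff_matInner.comp (hf.prodMk hg)

/-- Product rule for matrix-valued functions of a real variable. -/
lemma HasDerivAt.matmul {f g : ℝ → Matrix (Fin n) (Fin n) ℝ}
    {f' g' : Matrix (Fin n) (Fin n) ℝ} {t : ℝ}
    (hf : HasDerivAt f f' t) (hg : HasDerivAt g g' t) :
    HasDerivAt (fun s => f s * g s) (f' * g t + f t * g') t := by
  have hc : HasDerivAt (fun s => mulCLM n (f s)) (mulCLM n f') t :=
    by have := ((mulCLM n).hasFDerivAt (x := f t)).comp_hasDerivAt t hf; exact this
  have := hc.clm_apply hg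
  simpa using this

lemma HasDerivAt.matInner'' {f g : ℝ → Matrix (Fin n) (Fin n) ℝ}
    {f' g' : Matrix (Fin n) (Fin n) ℝ} {t : ℝ}
    (hf : HasDerivAt f f' t) (hg : HasDerivAt g g' t) :
    HasDerivAt (fun s => matInner (f s) (g s)) (matInner f' (g t) + matInner (f t) g') t := by
  have hc : HasDerivAt (fun s => innerCLM n (f s)) (innerCLM n f') t :=
    by have := ((innerCLM n).hasFDerivAt (x := f t)).comp_hasDerivAt t hf; exact this
  have := hc.clm_apply hg
  simpa using this

lemma matInner_comm (X Y : Matrix (Fin n) (Fin n) ℝ) : matInner X Y = matInner Y X := by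
  rw [matInner, matInner, ← Matrix.trace_transpose, Matrix.transpose_mul,
    Matrix.transpose_transpose]

lemma matInner_skew_bracket {X Y : Matrix (Fin n) (Fin n) ℝ} (hX : Xᵀ = -X) :
    matInner X (Y * X - X * Y) = 0 := by
  rw [matInner, hX, Matrix.mul_sub, Matrix.trace_sub]
  rw [Matrix.neg_mul, Matrix.neg_mul, Matrix.trace_neg, Matrix.trace_neg]
  rw [← Matrix.mul_assoc, Matrix.trace_mul_comm (X * Y) X, ← Matrix.mul_assoc]
  ring

lemma matInner_sub_right (X Y Z : Matrix (Fin n) (Fin n) ℝ) :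
    matInner X (Y - Z) = matInner X Y - matInner X Z := by
  simp [matInner, Matrix.mul_sub]

lemma matInner_sum_left {ι : Type*} (s : Finset ι) (W : ι → Matrix (Fin n) (Fin n) ℝ)
    (Y : Matrix (Fin n) (Fin n) ℝ) :
    matInner (∑ k ∈ s, W k) Y = ∑ k ∈ s, matInner (W k) Y := by
  simp [matInner, Matrix.transpose_sum, Matrix.sum_mul]

@[simp] lemma matInner_zero_left (Y : Matrix (Fin n) (Fin n) ℝ) : matInner 0 Y = 0 := by
  simp [matInner]


/-- The joint gauge flow `(t, x) ↦ exp (t • u x)`. -/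
noncomputable def gphi (u : (Fin 3 → ℝ) → Matrix (Fin n) (Fin n) ℝ)
    (p : ℝ × (Fin 3 → ℝ)) : Matrix (Fin n) (Fin n) ℝ :=
  NormedSpace.exp (p.1 • u p.2)

section gphi

variable {u : (Fin 3 → ℝ) → Matrix (Fin n) (Fin n) ℝ} (hu : ContDiff ℝ (⊤ : ℕ∞) u)
include hu

lemma gphi_contDiff : ContDiff ℝ (⊤ : ℕ∞) (gphi u) :=
  contDiff_exp_mat.comp (contDiff_fst.smul (hu.comp contDiff_snd))

omit hu

lemma gphi_mul_neg (p : ℝ × (Fin 3 → ℝ)) : gphi u p * gphi (-u) p = 1 := by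
  rw [gphi, gphi, Pi.neg_apply, smul_neg]
  refine (Matrix.exp_add_of_commute _ _ (Commute.refl (p.1 • u p.2)).neg_right).symm.trans ?_
  simp

lemma gphi_zero (x : Fin 3 → ℝ) : gphi u ((0 : ℝ), x) = 1 := by
  simp [gphi, NormedSpace.exp_zero]

lemma gphi_inv (p : ℝ × (Fin 3 → ℝ)) : (gphi u p)⁻¹ = gphi (-u) p :=
  Matrix.inv_eq_right_inv (gphi_mul_neg p)

/-- Slice derivative in `t`. -/
lemma gphi_hasDerivAt (t : ℝ) (x : Fin 3 → ℝ) :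
    HasDerivAt (fun s : ℝ => gphi u (s, x)) (gphi u (t, x) * u x) t :=
  hasDerivAt_exp_smul_mat (u x) t

include hu

/-- The spatial partial derivative of a time-slice, expressed by the joint derivative. -/
lemma gphi_partialDeriv (k : Fin 3) (t : ℝ) (x : Fin 3 → ℝ) :
    partialDerivMat k (fun y => gphi u (t, y)) x
      = fderiv ℝ (gphi u) (t, x) (0, Pi.single k 1) := by
  have hdiff : HasFDerivAt (gphi u) (fderiv ℝ (gphi u) (t, x)) (t, x) :=
    (((gphi_contDiff hu).differentiable (by simp)) (t, x)).hasFDerivAt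
  have hincl : HasFDerivAt (fun y : Fin 3 → ℝ => ((t, y) : ℝ × (Fin 3 → ℝ)))
      ((0 : (Fin 3 → ℝ) →L[ℝ] ℝ).prod (ContinuousLinearMap.id ℝ (Fin 3 → ℝ))) x :=
    HasFDerivAt.prodMk (hasFDerivAt_const t x) (hasFDerivAt_id x)
  have hcomp := hdiff.comp x hincl
  rw [partialDerivMat, show (fun y => gphi u (t, y)) = gphi u ∘ Prod.mk t from rfl,
    ]
  erw [hcomp.fderiv]
  rfl

end gphi


section gphi2
variable {u : (Fin 3 → ℝ) → Matrix (Fin n) (Fin n) ℝ} (hu : ContDiff ℝ (⊤ : ℕ∞) u)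
include hu

lemma gphi_fderiv_space_zero (k : Fin 3) (x : Fin 3 → ℝ) :
    fderiv ℝ (gphi u) ((0 : ℝ), x) (0, Pi.single k 1) = 0 := by
  have hdiff : HasFDerivAt (gphi u) (fderiv ℝ (gphi u) ((0:ℝ), x)) ((0:ℝ), x) :=
    (((gphi_contDiff hu).differentiable (by simp)) _).hasFDerivAt
  have hincl : HasFDerivAt (fun y : Fin 3 → ℝ => (((0:ℝ), y) : ℝ × (Fin 3 → ℝ)))
      ((0 : (Fin 3 → ℝ) →L[ℝ] ℝ).prod (ContinuousLinearMap.id ℝ (Fin 3 → ℝ))) x :=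
    HasFDerivAt.prodMk (hasFDerivAt_const _ _) (hasFDerivAt_id x)
  have hcomp := hdiff.comp x hincl
  have hconst : (gphi u ∘ Prod.mk (0:ℝ)) = fun _ : Fin 3 → ℝ => (1 : Matrix (Fin n) (Fin n) ℝ) :=
    funext fun y => gphi_zero y
  have h0 := hcomp.fderiv
  rw [hconst, fderiv_fun_const] at h0
  have := congrArg (fun (L : (Fin 3 → ℝ) →L[ℝ] Matrix (Fin n) (Fin n) ℝ) => L (Pi.single k 1)) h0
  simpa using this.symm

/-- Schwarz symmetry: the `t`-derivative of the spatial partial of `gphi` at `t = 0`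
is the spatial partial of `u`. -/
lemma gphi_D_hasDerivAt (k : Fin 3) (x : Fin 3 → ℝ) :
    HasDerivAt (fun t : ℝ => fderiv ℝ (gphi u) (t, x) (0, Pi.single k 1))
      (fderiv ℝ u x (Pi.single k 1)) 0 := by
  have hsm := gphi_contDiff hu
  have hd1 : Differentiable ℝ (gphi u) := hsm.differentiable (by simp)
  have hsm1 : ContDiff ℝ (⊤ : ℕ∞) (fderiv ℝ (gphi u)) := hsm.fderiv_right (by simp)
  set Φ'' := fderiv ℝ (fderiv ℝ (gphi u)) ((0:ℝ), x) with hΦ''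
  have hd2 : HasFDerivAt (fderiv ℝ (gphi u)) Φ'' ((0:ℝ), x) :=
    ((hsm1.differentiable (by simp)) _).hasFDerivAt
  have hline : HasDerivAt (fun t : ℝ => ((t, x) : ℝ × (Fin 3 → ℝ))) (1, 0) 0 :=
    HasDerivAt.prodMk (hasDerivAt_id 0) (hasDerivAt_const 0 x)
  have hc : HasDerivAt (fun t : ℝ => fderiv ℝ (gphi u) (t, x)) (Φ'' (1, 0)) 0 :=
    hd2.comp_hasDerivAt 0 hline
  have happ : HasDerivAt (fun t : ℝ => fderiv ℝ (gphi u) (t, x) (0, Pi.single k 1))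
      (Φ'' (1, 0) (0, Pi.single k 1)) 0 := by
    have := hc.clm_apply (hasDerivAt_const (0:ℝ) (((0 : ℝ), Pi.single k 1) : ℝ × (Fin 3 → ℝ)))
    simpa using this
  have hsymm : Φ'' ((1:ℝ), (0 : Fin 3 → ℝ)) ((0:ℝ), Pi.single k 1)
      = Φ'' ((0:ℝ), Pi.single k 1) ((1:ℝ), (0 : Fin 3 → ℝ)) :=
    (hsm.contDiffAt.isSymmSndFDerivAt (by rw [minSmoothness_of_isRCLikeNormedField]; exact WithTop.coe_le_coe.2 le_top)).eq _ _
  -- the function x' ↦ ∂ₜ gphi (0, x') is u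
  have hu_eq : (fun x' : Fin 3 → ℝ =>
      fderiv ℝ (gphi u) ((0:ℝ), x') ((1:ℝ), (0 : Fin 3 → ℝ))) = u := by
    funext x'
    have hl : HasDerivAt (fun t : ℝ => ((t, x') : ℝ × (Fin 3 → ℝ))) (1, 0) 0 :=
      HasDerivAt.prodMk (hasDerivAt_id 0) (hasDerivAt_const 0 x')
    have h1 : HasDerivAt (fun t : ℝ => gphi u (t, x'))
        (fderiv ℝ (gphi u) ((0:ℝ), x') ((1:ℝ), (0 : Fin 3 → ℝ))) 0 :=
      (hd1 _).hasFDerivAt.comp_hasDerivAt 0 hl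
    have h2 : HasDerivAt (fun t : ℝ => gphi u (t, x')) (u x') 0 := by
      have := gphi_hasDerivAt (u := u) 0 x'
      rw [gphi_zero, one_mul] at this
      exact this
    exact h1.unique h2
  -- spatial derivative of that function
  have hincl : HasFDerivAt (fun x' : Fin 3 → ℝ => (((0:ℝ), x') : ℝ × (Fin 3 → ℝ)))
      ((0 : (Fin 3 → ℝ) →L[ℝ] ℝ).prod (ContinuousLinearMap.id ℝ (Fin 3 → ℝ))) x :=
    HasFDerivAt.prodMk (hasFDerivAt_const _ _) (hasFDerivAt_id x)
  have h3 : HasFDerivAt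
      (fun z : ℝ × (Fin 3 → ℝ) => fderiv ℝ (gphi u) z ((1:ℝ), (0 : Fin 3 → ℝ)))
      (Φ''.flip ((1:ℝ), (0 : Fin 3 → ℝ))) ((0:ℝ), x) := by
    have := hd2.clm_apply (hasFDerivAt_const (((1:ℝ), (0 : Fin 3 → ℝ)) : ℝ × (Fin 3 → ℝ)) ((0:ℝ), x))
    simpa using this
  have hcmp := h3.comp x hincl
  rw [show ((fun z : ℝ × (Fin 3 → ℝ) => fderiv ℝ (gphi u) z ((1:ℝ), (0 : Fin 3 → ℝ)))
      ∘ (fun x' : Fin 3 → ℝ => (((0:ℝ), x') : ℝ × (Fin 3 → ℝ)))) = u from hu_eq] at hcmp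
  have hfd := hcmp.fderiv
  have : fderiv ℝ u x (Pi.single k 1) = Φ'' ((0:ℝ), Pi.single k 1) ((1:ℝ), (0 : Fin 3 → ℝ)) := by
    rw [hfd]; simp
  rw [this, ← hsymm]
  exact happ


end gphi2

/-- The gauge-transformed connection, jointly in `(t, x)`. -/
noncomputable def gA (u : (Fin 3 → ℝ) → Matrix (Fin n) (Fin n) ℝ)
    (a : Fin 3 → (Fin 3 → ℝ) → Matrix (Fin n) (Fin n) ℝ) (k : Fin 3)
    (p : ℝ × (Fin 3 → ℝ)) : Matrix (Fin n) (Fin n) ℝ :=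
  gphi u p * a k p.2 * gphi (-u) p
    - fderiv ℝ (gphi u) p (0, Pi.single k 1) * gphi (-u) p

/-- The integrand, jointly in `(t, x)`. -/
noncomputable def gF (u : (Fin 3 → ℝ) → Matrix (Fin n) (Fin n) ℝ)
    (a : Fin 3 → (Fin 3 → ℝ) → Matrix (Fin n) (Fin n) ℝ)
    (p : ℝ × (Fin 3 → ℝ)) : ℝ :=
  ∑ k : Fin 3, matInner (gA u a k p) (gA u a k p)

section main
variable {u : (Fin 3 → ℝ) → Matrix (Fin n) (Fin n) ℝ}
  {a : Fin 3 → (Fin 3 → ℝ) → Matrix (Fin n) (Fin n) ℝ}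
  (hu : ContDiff ℝ (⊤ : ℕ∞) u) (ha : ∀ k, ContDiff ℝ (⊤ : ℕ∞) (a k))
include hu

lemma gauge_eq (t : ℝ) (x : Fin 3 → ℝ) (k : Fin 3) :
    gaugeTransform (fun y => NormedSpace.exp (t • u y)) a k x = gA u a k (t, x) := by
  have hg : (fun y => NormedSpace.exp (t • u y)) = fun y => gphi u (t, y) := rfl
  rw [gaugeTransform, hg, gphi_partialDeriv hu k t x, gA]
  show NormedSpace.exp (t • u x) * a k x * (NormedSpace.exp (t • u x))⁻¹ -
      fderiv ℝ (gphi u) (t, x) (0, Pi.single k 1) * (NormedSpace.exp (t • u x))⁻¹ = _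
  rw [show NormedSpace.exp (t • u x) = gphi u (t, x) from rfl, gphi_inv (u := u) (t, x)]

include ha

lemma gA_contDiff (k : Fin 3) : ContDiff ℝ (⊤ : ℕ∞) (gA u a k) := by
  have hφ := gphi_contDiff hu
  have hψ := gphi_contDiff (u := -u) hu.neg
  have hD : ContDiff ℝ (⊤ : ℕ∞) (fun p : ℝ × (Fin 3 → ℝ) =>
      fderiv ℝ (gphi u) p ((0 : ℝ), Pi.single k 1)) :=
    (hφ.fderiv_right (by simp)).clm_apply contDiff_const
  exact ((hφ.matmul ((ha k).comp contDiff_snd)).matmul hψ).sub (hD.matmul hψ)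

lemma gF_contDiff : ContDiff ℝ (⊤ : ℕ∞) (gF u a) :=
  ContDiff.sum fun k _ => ((gA_contDiff hu ha k).matInner' (gA_contDiff hu ha k))

omit ha

lemma gA_zero (k : Fin 3) (x : Fin 3 → ℝ) : gA u a k ((0 : ℝ), x) = a k x := by
  rw [gA, gphi_zero, gphi_zero, gphi_fderiv_space_zero hu]
  simp

/-- Slice derivative of the gauge-transformed connection at `t = 0`. -/
lemma gA_hasDerivAt (k : Fin 3) (x : Fin 3 → ℝ) :
    HasDerivAt (fun t : ℝ => gA u a k (t, x))
      (u x * a k x - a k x * u x - fderiv ℝ u x (Pi.single k 1)) 0 := by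
  have hφ : HasDerivAt (fun t : ℝ => gphi u (t, x)) (u x) 0 := by
    have := gphi_hasDerivAt (u := u) 0 x; rwa [gphi_zero, one_mul] at this
  have hψ : HasDerivAt (fun t : ℝ => gphi (-u) (t, x)) (-(u x)) 0 := by
    have := gphi_hasDerivAt (u := -u) 0 x
    rwa [gphi_zero, one_mul, Pi.neg_apply] at this
  have hD := gphi_D_hasDerivAt hu k x
  have h1 := (hφ.matmul (hasDerivAt_const (0 : ℝ) (a k x))).matmul hψ
  have h2 := hD.matmul hψ
  have h := h1.sub h2
  rw [gphi_zero, gphi_zero, gphi_fderiv_space_zero hu] at h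
  convert h using 1
  · rfl
  · rfl
  · rfl
  · rfl
  simp only [mul_zero, add_zero, one_mul, mul_one, zero_mul, mul_neg]
  abel

include ha

omit ha in
/-- Slice derivative of the integrand at `t = 0`. -/
lemma gF_hasDerivAt (x : Fin 3 → ℝ) :
    HasDerivAt (fun t : ℝ => gF u a (t, x))
      (∑ k : Fin 3,
        (matInner (u x * a k x - a k x * u x - fderiv ℝ u x (Pi.single k 1)) (a k x)
          + matInner (a k x) (u x * a k x - a k x * u x - fderiv ℝ u x (Pi.single k 1)))) 0 := by
  apply HasDerivAt.fun_sum
  intro k _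
  have h := (gA_hasDerivAt hu (a := a) k x).matInner'' (gA_hasDerivAt hu (a := a) k x)
  rwa [gA_zero hu] at h

end main


end AuxiliaryGauge

/-- for smooth compactly supported skew-symmetric-matrix-valued `a = (a_k)`
and `u` on `ℝ³`, with `g_t(x) = exp(t·u(x))` the pointwise matrix exponential, the first
variation of the squared L² norm of the gauge-transformed connection along the gauge
orbit is `d/dt|_{t=0} ∫ Σ_k ⟨a^{g_t}_k, a^{g_t}_k⟩ = 2 ∫ ⟨Σ_k ∂_k a_k, u⟩`. -/
theorem first_variation_gauge_orbit_norm {n : ℕ}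
    (a : Fin 3 → (Fin 3 → ℝ) → Matrix (Fin n) (Fin n) ℝ)
    (ha : ∀ k, ContDiff ℝ (⊤ : ℕ∞) (a k)) (hasupp : ∀ k, HasCompactSupport (a k))
    (haskew : ∀ k x, (a k x)ᵀ = -(a k x))
    (u : (Fin 3 → ℝ) → Matrix (Fin n) (Fin n) ℝ)
    (hu : ContDiff ℝ (⊤ : ℕ∞) u) (husupp : HasCompactSupport u)
    (huskew : ∀ x, (u x)ᵀ = -(u x)) :
    deriv
        (fun t : ℝ =>
          ∫ x : Fin 3 → ℝ,
            ∑ k : Fin 3,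
              matInner (gaugeTransform (fun y => NormedSpace.exp (t • u y)) a k x)
                (gaugeTransform (fun y => NormedSpace.exp (t • u y)) a k x)) 0 =
      2 * ∫ x : Fin 3 → ℝ, matInner (∑ k : Fin 3, partialDerivMat k (a k) x) (u x) := by
  classical
  -- the compact set carrying everything
  set K : Set (Fin 3 → ℝ) := tsupport u ∪ ⋃ k : Fin 3, tsupport (a k) with hKdef
  have hK : IsCompact K := husupp.union (isCompact_iUnion fun k => hasupp k)
  -- the integrand vanishes off K
  have hzero : ∀ x ∉ K, ∀ t : ℝ, gF u a (t, x) = 0 := by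
    intro x hx t
    have hx1 : x ∉ tsupport u := fun h => hx (Or.inl h)
    have hx2 : ∀ k, x ∉ tsupport (a k) := fun k h => hx (Or.inr (Set.mem_iUnion.2 ⟨k, h⟩))
    have hak : ∀ k, a k x = 0 := fun k => image_eq_zero_of_notMem_tsupport (hx2 k)
    have hev : ∀ᶠ y in nhds x, u y = 0 := notMem_tsupport_iff_eventuallyEq.mp hx1
    have hev2 : gphi u =ᶠ[nhds ((t, x) : ℝ × (Fin 3 → ℝ))]
        (fun _ => (1 : Matrix (Fin n) (Fin n) ℝ)) := by
      have h3 : ∀ᶠ p : ℝ × (Fin 3 → ℝ) in nhds (t, x), u p.2 = 0 :=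
        continuousAt_snd.eventually (p := fun y => u y = 0) hev
      filter_upwards [h3] with p hp
      simp [gphi, hp, NormedSpace.exp_zero]
    have hD : fderiv ℝ (gphi u) (t, x) = 0 := by
      rw [hev2.fderiv_eq, fderiv_fun_const]; rfl
    simp [gF, gA, hak]
    refine Finset.sum_eq_zero fun k _ => ?_
    erw [hD]
    show matInner (-((0 : Matrix (Fin n) (Fin n) ℝ) * _)) (-((0 : Matrix (Fin n) (Fin n) ℝ) * _)) = 0
    simp
  -- the joint derivative in the time direction
  set Fd : ℝ × (Fin 3 → ℝ) → ℝ :=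
    fun p => fderiv ℝ (gF u a) p ((1 : ℝ), (0 : Fin 3 → ℝ)) with hFddef
  have hgF := gF_contDiff hu ha
  have hFdcont : Continuous Fd :=
    ((hgF.fderiv_right (m := (⊤ : ℕ∞)) (by simp)).clm_apply contDiff_const).continuous
  have hslice : ∀ (t : ℝ) (x : Fin 3 → ℝ),
      HasDerivAt (fun s : ℝ => gF u a (s, x)) (Fd (t, x)) t := by
    intro t x
    have hline : HasDerivAt (fun s : ℝ => ((s, x) : ℝ × (Fin 3 → ℝ))) (1, 0) t :=
      HasDerivAt.prodMk (hasDerivAt_id t) (hasDerivAt_const t x)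
    exact ((hgF.differentiable (by simp)) _).hasFDerivAt.comp_hasDerivAt t hline
  have hFd0 : ∀ x ∉ K, ∀ t : ℝ, Fd (t, x) = 0 := by
    intro x hx t
    have h1 := hslice t x
    have h2 : (fun s : ℝ => gF u a (s, x)) = fun _ => (0 : ℝ) :=
      funext fun s => hzero x hx s
    rw [h2] at h1
    exact h1.unique (hasDerivAt_const t 0)
  -- bound on the derivative
  obtain ⟨C, hC⟩ : ∃ C, ∀ p ∈ (Set.Icc (-1 : ℝ) 1) ×ˢ K, ‖Fd p‖ ≤ C :=
    (isCompact_Icc.prod hK).exists_bound_of_continuousOn hFdcont.continuousOn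
  -- differentiate under the integral
  have hmain := hasDerivAt_integral_of_dominated_loc_of_deriv_le
      (F := fun t x => gF u a (t, x)) (F' := fun t x => Fd (t, x)) (x₀ := (0 : ℝ))
      (μ := (volume : Measure (Fin 3 → ℝ))) (bound := K.indicator fun _ => C)
      (s := Metric.ball 0 1) (Metric.ball_mem_nhds 0 one_pos)
      (Filter.Eventually.of_forall fun t =>
        ((hgF.continuous.comp (Continuous.prodMk_right t)).aestronglyMeasurable))
      ((hgF.continuous.comp (Continuous.prodMk_right (0 : ℝ))).integrable_of_hasCompactSupport
        (HasCompactSupport.intro hK fun x hx => hzero x hx 0))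
      ((hFdcont.comp (Continuous.prodMk_right (0 : ℝ))).aestronglyMeasurable)
      (Filter.Eventually.of_forall fun x => by
        intro t ht
        by_cases hx : x ∈ K
        · rw [Set.indicator_of_mem hx]
          refine hC (t, x) ⟨?_, hx⟩
          have := Metric.mem_ball.mp ht
          rw [Real.dist_eq, sub_zero] at this
          exact ⟨neg_le_of_abs_le this.le, le_of_abs_le this.le⟩
        · rw [Set.indicator_of_notMem hx]
          show ‖Fd (t, x)‖ ≤ 0
          rw [hFd0 x hx t]; simp)
      ((integrable_indicator_iff hK.measurableSet).2
        (integrableOn_const hK.measure_lt_top.ne))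
      (Filter.Eventually.of_forall fun x t _ => hslice t x)
  obtain ⟨-, hder⟩ := hmain
  -- rewrite the statement's function as the integral of gF
  have hfun : (fun t : ℝ =>
      ∫ x : Fin 3 → ℝ,
        ∑ k : Fin 3,
          matInner (gaugeTransform (fun y => NormedSpace.exp (t • u y)) a k x)
            (gaugeTransform (fun y => NormedSpace.exp (t • u y)) a k x))
      = fun t : ℝ => ∫ x : Fin 3 → ℝ, gF u a (t, x) := by
    funext t
    congr 1
    funext x
    rw [gF]
    exact Finset.sum_congr rfl fun k _ => by erw [gauge_eq hu t x k]
  rw [hfun, hder.deriv]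
  -- pointwise value of the derivative at time 0
  have hpt : ∀ x : Fin 3 → ℝ, Fd (0, x)
      = ∑ k : Fin 3, (-2 : ℝ) * matInner (a k x) (fderiv ℝ u x (Pi.single k 1)) := by
    intro x
    have h1 := (hslice 0 x).unique (gF_hasDerivAt hu (a := a) x)
    rw [h1]
    refine Finset.sum_congr rfl fun k _ => ?_
    have hb : matInner (a k x)
        (u x * a k x - a k x * u x - fderiv ℝ u x (Pi.single k 1))
        = - matInner (a k x) (fderiv ℝ u x (Pi.single k 1)) := by
      rw [matInner_sub_right, matInner_skew_bracket (haskew k x)]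
      ring
    erw [matInner_comm (u x * a k x - a k x * u x - fderiv ℝ u x (Pi.single k 1)) (a k x), hb]
    ring
  -- integrability of the pieces
  have hcont_ak_du : ∀ k : Fin 3, Continuous fun x : Fin 3 → ℝ =>
      matInner (a k x) (fderiv ℝ u x (Pi.single k 1)) := fun k =>
    ((ha k).matInner' ((hu.fderiv_right (m := (⊤ : ℕ∞)) (by simp)).clm_apply contDiff_const)).continuous
  have hcont_dak_u : ∀ k : Fin 3, Continuous fun x : Fin 3 → ℝ =>
      matInner (fderiv ℝ (a k) x (Pi.single k 1)) (u x) := fun k =>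
    ((((ha k).fderiv_right (m := (⊤ : ℕ∞)) (by simp)).clm_apply contDiff_const).matInner' hu).continuous
  have hsupp_ak_du : ∀ k : Fin 3, HasCompactSupport fun x : Fin 3 → ℝ =>
      matInner (a k x) (fderiv ℝ u x (Pi.single k 1)) := fun k =>
    HasCompactSupport.intro (hasupp k) fun x hx => by
      rw [image_eq_zero_of_notMem_tsupport hx]; simp
  have hsupp_dak_u : ∀ k : Fin 3, HasCompactSupport fun x : Fin 3 → ℝ =>
      matInner (fderiv ℝ (a k) x (Pi.single k 1)) (u x) := fun k =>
    HasCompactSupport.intro (hasupp k) fun x hx => by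
      have : fderiv ℝ (a k) x = 0 := by
        by_contra h
        exact hx (support_fderiv_subset ℝ (Function.mem_support.2 h))
      rw [this]; simp
  have hint_ak_du : ∀ k : Fin 3, Integrable (fun x : Fin 3 → ℝ =>
      matInner (a k x) (fderiv ℝ u x (Pi.single k 1))) := fun k =>
    (hcont_ak_du k).integrable_of_hasCompactSupport (hsupp_ak_du k)
  have hint_dak_u : ∀ k : Fin 3, Integrable (fun x : Fin 3 → ℝ =>
      matInner (fderiv ℝ (a k) x (Pi.single k 1)) (u x)) := fun k =>
    (hcont_dak_u k).integrable_of_hasCompactSupport (hsupp_dak_u k)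
  have hint_ak_u : ∀ k : Fin 3, Integrable (fun x : Fin 3 → ℝ =>
      matInner (a k x) (u x)) := fun k =>
    (((ha k).matInner' hu).continuous).integrable_of_hasCompactSupport
      (HasCompactSupport.intro (hasupp k) fun x hx => by
        rw [image_eq_zero_of_notMem_tsupport hx]; simp)
  -- integration by parts in each direction
  have hibp : ∀ k : Fin 3,
      ∫ x : Fin 3 → ℝ, matInner (a k x) (fderiv ℝ u x (Pi.single k 1))
        = - ∫ x : Fin 3 → ℝ, matInner (fderiv ℝ (a k) x (Pi.single k 1)) (u x) := by
    intro k
    have := integral_bilinear_fderiv_right_eq_neg_left_of_integrable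
      (μ := (volume : Measure (Fin 3 → ℝ))) (B := innerCLM n) (f := a k) (g := u)
      (v := Pi.single k 1)
      (hint_dak_u k) (hint_ak_du k)
      (hint_ak_u k)
      (fun x _ => (ha k).differentiable (by simp) x) (fun x _ => hu.differentiable (by simp) x)
    convert this using 4 <;> rfl
  -- put everything together
  calc ∫ x : Fin 3 → ℝ, Fd (0, x)
      = ∫ x : Fin 3 → ℝ, ∑ k : Fin 3,
          (-2 : ℝ) * matInner (a k x) (fderiv ℝ u x (Pi.single k 1)) := by
        congr 1; funext x; exact hpt x
    _ = ∑ k : Fin 3, ∫ x : Fin 3 → ℝ,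
          (-2 : ℝ) * matInner (a k x) (fderiv ℝ u x (Pi.single k 1)) :=
        integral_finset_sum _ fun k _ => (hint_ak_du k).const_mul _
    _ = ∑ k : Fin 3, (-2 : ℝ) * ∫ x : Fin 3 → ℝ,
          matInner (a k x) (fderiv ℝ u x (Pi.single k 1)) := by
        exact Finset.sum_congr rfl fun k _ => integral_const_mul _ _
    _ = ∑ k : Fin 3, (2 : ℝ) * ∫ x : Fin 3 → ℝ,
          matInner (fderiv ℝ (a k) x (Pi.single k 1)) (u x) := by
        refine Finset.sum_congr rfl fun k _ => ?_
        rw [hibp k]; ring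
    _ = 2 * ∫ x : Fin 3 → ℝ, matInner (∑ k : Fin 3, partialDerivMat k (a k) x) (u x) := by
        rw [← Finset.mul_sum]
        congr 1
        rw [← integral_finset_sum _ fun k _ => hint_dak_u k]
        congr 1; funext x
        rw [matInner_sum_left]
        rfl
end

section
/- Let 𝔤 be a finite-dimensional real Lie algebra and let A_k, E_k : ℝ × ℝ³ → 𝔤 (k = 1,2,3) be smooth maps satisfying the temporal-gauge Yang–Mills evolution equations: ∂_t A_k = E_k and ∂_t E_k = Σ_{j=1}^3 ( ∂_j F_{jk} − [A_j, F_{jk}] ), where F_{jk} = ∂_j A_k − ∂_k A_j − [A_j, A_k] (spatial derivatives at each fixed time). Then the Gauss constraint function G := Σ_{k=1}^3 ( ∂_k E_k − [A_k, E_k] ) satisfies ∂_t G = 0 identically; consequently, if the constraint G(0, ·) = 0 holds at time t = 0, then G(t, ·) = 0 for all t. -/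
section Aux
variable {P V : Type*} [NormedAddCommGroup P] [NormedSpace ℝ P]
  [NormedAddCommGroup V] [NormedSpace ℝ V]

lemma aux_contDiff_fderiv_apply {f : P → V} (hf : ContDiff ℝ (⊤ : ℕ∞) f) (v : P) :
    ContDiff ℝ (⊤ : ℕ∞) (fun p => fderiv ℝ f p v) :=
  (hf.fderiv_right (by simp)).clm_apply contDiff_const

lemma aux_contDiff_bilin (B : V →L[ℝ] V →L[ℝ] V) {a b : P → V}
    (ha : ContDiff ℝ (⊤ : ℕ∞) a) (hb : ContDiff ℝ (⊤ : ℕ∞) b) :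
    ContDiff ℝ (⊤ : ℕ∞) (fun q => B (a q) (b q)) :=
  (B.contDiff.comp ha).clm_apply hb

lemma aux_swap {f : P → V} (hf : ContDiff ℝ (⊤ : ℕ∞) f) (p v w : P) :
    fderiv ℝ (fun q => fderiv ℝ f q v) p w = fderiv ℝ (fun q => fderiv ℝ f q w) p v := by
  have hdf : ContDiff ℝ (⊤ : ℕ∞) (fderiv ℝ f) := hf.fderiv_right (by simp)
  have hdfd : DifferentiableAt ℝ (fderiv ℝ f) p := hdf.differentiable (by simp) p
  have h1 : ∀ u : P, fderiv ℝ (fun q => fderiv ℝ f q u) p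
      = (fderiv ℝ (fderiv ℝ f) p).flip u := by
    intro u
    rw [fderiv_clm_apply hdfd (differentiableAt_const u)]
    simp
  rw [h1 v, h1 w]
  simp only [ContinuousLinearMap.flip_apply]
  exact second_derivative_symmetric (fun y => (hf.differentiable (by simp) y).hasFDerivAt)
    hdfd.hasFDerivAt w v

lemma aux_fderiv_bilin (B : V →L[ℝ] V →L[ℝ] V) {a b : P → V} {p : P}
    (ha : DifferentiableAt ℝ a p) (hb : DifferentiableAt ℝ b p) (w : P) :
    fderiv ℝ (fun q => B (a q) (b q)) p w
      = B (fderiv ℝ a p w) (b p) + B (a p) (fderiv ℝ b p w) := by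
  have hc : DifferentiableAt ℝ (fun q => B (a q)) p := B.differentiableAt.comp p ha
  have hcc : fderiv ℝ (fun q => B (a q)) p = B.comp (fderiv ℝ a p) := by
    change fderiv ℝ (B ∘ a) p = _
    rw [fderiv_comp p B.differentiableAt ha, B.fderiv]
  rw [fderiv_clm_apply hc hb]
  simp [hcc]
  abel

lemma aux_eq_zero_of_eq_neg {x : V} (h : x = -x) : x = 0 := by
  have h2 : (2:ℝ) • x = 0 := by rw [two_smul]; nth_rewrite 1 [h]; abel
  rcases smul_eq_zero.1 h2 with h | h
  · norm_num at h
  · exact h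

lemma aux_half {x y : V} (h : x + x = y + y) : x = y := by
  have h2 : (2:ℝ) • x = (2:ℝ) • y := by rw [two_smul, two_smul]; exact h
  exact smul_right_injective V (by norm_num) h2

end Aux

set_option maxHeartbeats 1000000


/-- for a finite-dimensional real Lie algebra `𝔤` (bracket `L`, with
antisymmetry and Jacobi identity), smooth fields `A_k, E_k : ℝ × ℝ³ → 𝔤` satisfying the
temporal-gauge Yang–Mills evolution equations `∂_t A_k = E_k`,
`∂_t E_k = Σ_j (∂_j F_{jk} − [A_j, F_{jk}])` with
`F_{jk} = ∂_j A_k − ∂_k A_j − [A_j, A_k]`, the Gauss constraint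
`G = Σ_k (∂_k E_k − [A_k, E_k])` satisfies `∂_t G = 0`; consequently, if `G(0,·) = 0`
then `G(t,·) = 0` for all `t`. -/
theorem gauss_constraint_conserved
    {𝔤 : Type*} [NormedAddCommGroup 𝔤] [NormedSpace ℝ 𝔤] [FiniteDimensional ℝ 𝔤]
    (L : 𝔤 →ₗ[ℝ] 𝔤 →ₗ[ℝ] 𝔤)
    (hanti : ∀ x y : 𝔤, L x y = -L y x)
    (hjacobi : ∀ x y z : 𝔤, L x (L y z) = L (L x y) z + L y (L x z))
    (A E : Fin 3 → ℝ × (Fin 3 → ℝ) → 𝔤)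
    (hA : ∀ k, ContDiff ℝ (⊤ : ℕ∞) (A k)) (hE : ∀ k, ContDiff ℝ (⊤ : ℕ∞) (E k))
    (F : Fin 3 → Fin 3 → ℝ × (Fin 3 → ℝ) → 𝔤)
    (hF : ∀ j k p, F j k p =
      fderiv ℝ (A k) p (0, Pi.single j 1) - fderiv ℝ (A j) p (0, Pi.single k 1) -
        L (A j p) (A k p))
    (hev₁ : ∀ k p, fderiv ℝ (A k) p (1, 0) = E k p)
    (hev₂ : ∀ k p, fderiv ℝ (E k) p (1, 0) =
      ∑ j : Fin 3, (fderiv ℝ (F j k) p (0, Pi.single j 1) - L (A j p) (F j k p)))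
    (G : ℝ × (Fin 3 → ℝ) → 𝔤)
    (hG : ∀ p, G p =
      ∑ k : Fin 3, (fderiv ℝ (E k) p (0, Pi.single k 1) - L (A k p) (E k p))) :
    (∀ p : ℝ × (Fin 3 → ℝ), fderiv ℝ G p (1, 0) = 0) ∧
      ((∀ x : Fin 3 → ℝ, G (0, x) = 0) → ∀ (t : ℝ) (x : Fin 3 → ℝ), G (t, x) = 0) := by
  classical
  set B : 𝔤 →L[ℝ] 𝔤 →L[ℝ] 𝔤 :=
    LinearMap.toContinuousLinearMap
      ((LinearMap.toContinuousLinearMap :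
          (𝔤 →ₗ[ℝ] 𝔤) ≃ₗ[ℝ] 𝔤 →L[ℝ] 𝔤).toLinearMap.comp L) with hBdef
  have hBL : ∀ x y : 𝔤, B x y = L x y := by
    intro x y
    rw [hBdef]
    simp [LinearMap.coe_toContinuousLinearMap']
  set τ : ℝ × (Fin 3 → ℝ) := (1, 0) with hτ
  set e : Fin 3 → ℝ × (Fin 3 → ℝ) := fun j => (0, Pi.single j 1) with he
  -- basic algebraic facts
  have hLzero : ∀ x : 𝔤, L x x = 0 := fun x => aux_eq_zero_of_eq_neg (hanti x x)
  have hBzero : ∀ x : 𝔤, B x x = 0 := fun x => by rw [hBL]; exact hLzero x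
  have hBanti : ∀ x y : 𝔤, B x y = -B y x := fun x y => by
    rw [hBL, hBL]; exact hanti x y
  have hBjac : ∀ x y z : 𝔤, B x (B y z) = B (B x y) z + B y (B x z) := fun x y z => by
    simp only [hBL]; exact hjacobi x y z
  -- function forms
  have hFfun : ∀ j k, F j k = fun p =>
      fderiv ℝ (A k) p (e j) - fderiv ℝ (A j) p (e k) - B (A j p) (A k p) := by
    intro j k; funext p
    simp only [he]
    rw [hF j k p, hBL]
  have hGfun : G = fun p => ∑ k : Fin 3,
      (fderiv ℝ (E k) p (e k) - B (A k p) (E k p)) := by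
    funext p
    simp only [he]
    rw [hG p]
    simp only [hBL]
  -- smoothness
  have hFs : ∀ j k, ContDiff ℝ (⊤ : ℕ∞) (F j k) := by
    intro j k
    rw [hFfun j k]
    exact ((aux_contDiff_fderiv_apply (hA k) _).sub
      (aux_contDiff_fderiv_apply (hA j) _)).sub (aux_contDiff_bilin B (hA j) (hA k))
  have hGs : ContDiff ℝ (⊤ : ℕ∞) G := by
    rw [hGfun]
    exact ContDiff.sum fun k _ =>
      (aux_contDiff_fderiv_apply (hE k) _).sub (aux_contDiff_bilin B (hA k) (hE k))
  -- differentiability shorthands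
  have dA : ∀ k p, DifferentiableAt ℝ (A k) p := fun k p => (hA k).differentiable (by simp) p
  have dE : ∀ k p, DifferentiableAt ℝ (E k) p := fun k p => (hE k).differentiable (by simp) p
  have dF : ∀ j k p, DifferentiableAt ℝ (F j k) p := fun j k p =>
    (hFs j k).differentiable (by simp) p
  have dDF : ∀ j k (v : ℝ × (Fin 3 → ℝ)) p,
      DifferentiableAt ℝ (fun q => fderiv ℝ (F j k) q v) p := fun j k v p =>
    (aux_contDiff_fderiv_apply (hFs j k) v).differentiable (by simp) p
  have dDE : ∀ k (v : ℝ × (Fin 3 → ℝ)) p,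
      DifferentiableAt ℝ (fun q => fderiv ℝ (E k) q v) p := fun k v p =>
    (aux_contDiff_fderiv_apply (hE k) v).differentiable (by simp) p
  have dBE : ∀ k p, DifferentiableAt ℝ (fun q => B (A k q) (E k q)) p := fun k p =>
    (aux_contDiff_bilin B (hA k) (hE k)).differentiable (by simp) p
  have dBF : ∀ j k p, DifferentiableAt ℝ (fun q => B (A j q) (F j k q)) p := fun j k p =>
    (aux_contDiff_bilin B (hA j) (hFs j k)).differentiable (by simp) p
  -- antisymmetry of F
  have hFanti : ∀ j k, F j k = fun q => -(F k j q) := by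
    intro j k; funext q
    rw [hFfun j k, hFfun k j]
    simp only
    rw [hBanti (A j q) (A k q)]
    abel
  have hFanti' : ∀ j k q, F k j q = -(F j k q) := by
    intro j k q
    rw [hFanti k j]
  have hDFanti : ∀ j k p (v : ℝ × (Fin 3 → ℝ)),
      fderiv ℝ (F j k) p v = -fderiv ℝ (F k j) p v := by
    intro j k p v
    rw [hFanti j k, fderiv_fun_neg, ContinuousLinearMap.neg_apply]
  -- the key derivative computation
  have key : ∀ p : ℝ × (Fin 3 → ℝ), fderiv ℝ G p τ = 0 := by
    intro p
    set t1 : Fin 3 → Fin 3 → 𝔤 :=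
      fun j k => fderiv ℝ (fun q => fderiv ℝ (F j k) q (e j)) p (e k) with ht1
    set t2 : Fin 3 → Fin 3 → 𝔤 :=
      fun j k => B (fderiv ℝ (A j) p (e k)) (F j k p) with ht2
    set t3 : Fin 3 → Fin 3 → 𝔤 :=
      fun j k => B (A j p) (fderiv ℝ (F j k) p (e k)) with ht3
    set t4 : Fin 3 → Fin 3 → 𝔤 :=
      fun j k => B (A k p) (fderiv ℝ (F j k) p (e j)) with ht4
    set t5 : Fin 3 → Fin 3 → 𝔤 :=
      fun j k => B (A k p) (B (A j p) (F j k p)) with ht5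
    have stepA : ∀ k : Fin 3, fderiv ℝ (fun q => fderiv ℝ (E k) q (e k)) p τ
        = ∑ j : Fin 3, (t1 j k - (t2 j k + t3 j k)) := by
      intro k
      rw [aux_swap (hE k) p (e k) τ]
      have hfun : (fun q => fderiv ℝ (E k) q τ)
          = fun q => ∑ j : Fin 3, (fderiv ℝ (F j k) q (e j) - B (A j q) (F j k q)) := by
        funext q
        rw [hev₂ k q]
        simp only [hBL, he]
      rw [hfun, fderiv_fun_sum (A := fun j q => fderiv ℝ (F j k) q (e j) - B (A j q) (F j k q)) (fun j _ => (dDF j k (e j) p).sub (dBF j k p)),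
        ContinuousLinearMap.sum_apply]
      refine Finset.sum_congr rfl fun j _ => ?_
      rw [fderiv_fun_sub (dDF j k (e j) p) (dBF j k p), ContinuousLinearMap.sub_apply,
        aux_fderiv_bilin B (dA j p) (dF j k p)]
    have stepB : ∀ k : Fin 3, fderiv ℝ (fun q => B (A k q) (E k q)) p τ
        = ∑ j : Fin 3, (t4 j k - t5 j k) := by
      intro k
      rw [aux_fderiv_bilin B (dA k p) (dE k p), hev₁ k p, hBzero, zero_add, hev₂ k p,
        map_sum]
      refine Finset.sum_congr rfl fun j _ => ?_
      rw [map_sub]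
      simp only [ht4, ht5, hBL, he]
    have hexp : fderiv ℝ G p τ
        = ∑ k : Fin 3, (∑ j : Fin 3, (t1 j k - (t2 j k + t3 j k))
            - ∑ j : Fin 3, (t4 j k - t5 j k)) := by
      rw [hGfun, fderiv_fun_sum (A := fun k q => fderiv ℝ (E k) q (e k) - B (A k q) (E k q)) (fun k _ => (dDE k (e k) p).sub (dBE k p)),
        ContinuousLinearMap.sum_apply]
      refine Finset.sum_congr rfl fun k _ => ?_
      rw [fderiv_fun_sub (dDE k (e k) p) (dBE k p), ContinuousLinearMap.sub_apply,
        stepA k, stepB k]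
    -- pointwise antisymmetry facts
    have hpoint1 : ∀ j k : Fin 3, t1 k j = -t1 j k := by
      intro j k
      simp only [ht1]
      have hfun : (fun q => fderiv ℝ (F k j) q (e k))
          = fun q => -(fderiv ℝ (F j k) q (e k)) := funext fun q => hDFanti k j q (e k)
      rw [hfun, fderiv_fun_neg, ContinuousLinearMap.neg_apply,
        aux_swap (hFs j k) p (e k) (e j)]
    have hS1 : ∑ k : Fin 3, ∑ j : Fin 3, t1 j k = 0 := by
      apply aux_eq_zero_of_eq_neg
      calc ∑ k : Fin 3, ∑ j : Fin 3, t1 j k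
          = ∑ k : Fin 3, ∑ j : Fin 3, t1 k j := Finset.sum_comm
        _ = ∑ k : Fin 3, ∑ j : Fin 3, -t1 j k :=
            Finset.sum_congr rfl fun k _ => Finset.sum_congr rfl fun j _ => hpoint1 j k
        _ = -∑ k : Fin 3, ∑ j : Fin 3, t1 j k := by
            simp only [Finset.sum_neg_distrib]
    have hS4eq : ∑ k : Fin 3, ∑ j : Fin 3, t4 j k
        = -∑ k : Fin 3, ∑ j : Fin 3, t3 j k := by
      calc ∑ k : Fin 3, ∑ j : Fin 3, t4 j k
          = ∑ k : Fin 3, ∑ j : Fin 3, t4 k j := Finset.sum_comm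
        _ = ∑ k : Fin 3, ∑ j : Fin 3, -t3 j k := by
            refine Finset.sum_congr rfl fun k _ => Finset.sum_congr rfl fun j _ => ?_
            simp only [ht4, ht3]
            rw [hDFanti k j p (e k), map_neg]
        _ = -∑ k : Fin 3, ∑ j : Fin 3, t3 j k := by
            simp only [Finset.sum_neg_distrib]
    have h2sum : (∑ k : Fin 3, ∑ j : Fin 3, t2 j k) + (∑ k : Fin 3, ∑ j : Fin 3, t2 j k)
        = -(∑ k : Fin 3, ∑ j : Fin 3, B (B (A j p) (A k p)) (F j k p)) := by
      have hpt : ∀ j k : Fin 3, t2 j k + t2 k j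
          = -(B (B (A j p) (A k p)) (F j k p)) := by
        intro j k
        simp only [ht2]
        have hF' : F j k p
            = fderiv ℝ (A k) p (e j) - fderiv ℝ (A j) p (e k) - B (A j p) (A k p) := by
          rw [hFfun j k]
        have huv : fderiv ℝ (A j) p (e k) - fderiv ℝ (A k) p (e j)
            = -(F j k p) - B (A j p) (A k p) := by
          rw [hF']; abel
        calc B (fderiv ℝ (A j) p (e k)) (F j k p)
              + B (fderiv ℝ (A k) p (e j)) (F k j p)
            = B (fderiv ℝ (A j) p (e k) - fderiv ℝ (A k) p (e j)) (F j k p) := by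
              rw [hFanti' j k p, map_neg, map_sub, ContinuousLinearMap.sub_apply]
              abel
          _ = B (-(F j k p) - B (A j p) (A k p)) (F j k p) := by rw [huv]
          _ = -(B (B (A j p) (A k p)) (F j k p)) := by
              rw [map_sub, map_neg, ContinuousLinearMap.sub_apply,
                ContinuousLinearMap.neg_apply, hBzero]
              abel
      calc (∑ k : Fin 3, ∑ j : Fin 3, t2 j k) + (∑ k : Fin 3, ∑ j : Fin 3, t2 j k)
          = (∑ k : Fin 3, ∑ j : Fin 3, t2 j k) + (∑ k : Fin 3, ∑ j : Fin 3, t2 k j) := by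
            nth_rewrite 2 [show (∑ k : Fin 3, ∑ j : Fin 3, t2 j k)
              = ∑ k : Fin 3, ∑ j : Fin 3, t2 k j from Finset.sum_comm]
            rfl
        _ = ∑ k : Fin 3, ∑ j : Fin 3, (t2 j k + t2 k j) := by
            simp only [Finset.sum_add_distrib]
        _ = ∑ k : Fin 3, ∑ j : Fin 3, -(B (B (A j p) (A k p)) (F j k p)) :=
            Finset.sum_congr rfl fun k _ => Finset.sum_congr rfl fun j _ => hpt j k
        _ = -(∑ k : Fin 3, ∑ j : Fin 3, B (B (A j p) (A k p)) (F j k p)) := by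
            simp only [Finset.sum_neg_distrib]
    have h5sum : (∑ k : Fin 3, ∑ j : Fin 3, t5 j k) + (∑ k : Fin 3, ∑ j : Fin 3, t5 j k)
        = -(∑ k : Fin 3, ∑ j : Fin 3, B (B (A j p) (A k p)) (F j k p)) := by
      have hjac' : ∀ j k : Fin 3, t5 j k
          = B (B (A k p) (A j p)) (F j k p) + B (A j p) (B (A k p) (F j k p)) := by
        intro j k
        simp only [ht5]
        exact hBjac (A k p) (A j p) (F j k p)
      have hY : (∑ k : Fin 3, ∑ j : Fin 3, B (A j p) (B (A k p) (F j k p)))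
          = -(∑ k : Fin 3, ∑ j : Fin 3, t5 j k) := by
        calc ∑ k : Fin 3, ∑ j : Fin 3, B (A j p) (B (A k p) (F j k p))
            = ∑ k : Fin 3, ∑ j : Fin 3, B (A k p) (B (A j p) (F k j p)) := Finset.sum_comm
          _ = ∑ k : Fin 3, ∑ j : Fin 3, -(t5 j k) := by
              refine Finset.sum_congr rfl fun k _ => Finset.sum_congr rfl fun j _ => ?_
              rw [hFanti' j k p, map_neg, map_neg]
          _ = -(∑ k : Fin 3, ∑ j : Fin 3, t5 j k) := by
              simp only [Finset.sum_neg_distrib]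
      have hfirst : (∑ k : Fin 3, ∑ j : Fin 3, B (B (A k p) (A j p)) (F j k p))
          = -(∑ k : Fin 3, ∑ j : Fin 3, B (B (A j p) (A k p)) (F j k p)) := by
        calc ∑ k : Fin 3, ∑ j : Fin 3, B (B (A k p) (A j p)) (F j k p)
            = ∑ k : Fin 3, ∑ j : Fin 3, -(B (B (A j p) (A k p)) (F j k p)) := by
              refine Finset.sum_congr rfl fun k _ => Finset.sum_congr rfl fun j _ => ?_
              rw [hBanti (A k p) (A j p), map_neg, ContinuousLinearMap.neg_apply]
          _ = -(∑ k : Fin 3, ∑ j : Fin 3, B (B (A j p) (A k p)) (F j k p)) := by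
              simp only [Finset.sum_neg_distrib]
      have hsplit : ∑ k : Fin 3, ∑ j : Fin 3, t5 j k
          = (∑ k : Fin 3, ∑ j : Fin 3, B (B (A k p) (A j p)) (F j k p))
            + (∑ k : Fin 3, ∑ j : Fin 3, B (A j p) (B (A k p) (F j k p))) := by
        calc ∑ k : Fin 3, ∑ j : Fin 3, t5 j k
            = ∑ k : Fin 3, ∑ j : Fin 3, (B (B (A k p) (A j p)) (F j k p)
                + B (A j p) (B (A k p) (F j k p))) :=
              Finset.sum_congr rfl fun k _ => Finset.sum_congr rfl fun j _ => hjac' j k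
          _ = _ := by simp only [Finset.sum_add_distrib]
      nth_rewrite 1 [hsplit]
      rw [hY, hfirst]
      abel
    have hS25 : ∑ k : Fin 3, ∑ j : Fin 3, t2 j k = ∑ k : Fin 3, ∑ j : Fin 3, t5 j k :=
      aux_half (h2sum.trans h5sum.symm)
    have hfinal : fderiv ℝ G p τ
        = (∑ k : Fin 3, ∑ j : Fin 3, t1 j k) - (∑ k : Fin 3, ∑ j : Fin 3, t2 j k)
          - (∑ k : Fin 3, ∑ j : Fin 3, t3 j k) - (∑ k : Fin 3, ∑ j : Fin 3, t4 j k)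
          + (∑ k : Fin 3, ∑ j : Fin 3, t5 j k) := by
      rw [hexp]
      simp only [Finset.sum_sub_distrib, Finset.sum_add_distrib]
      abel
    rw [hfinal, hS1, hS4eq, hS25]
    abel
  refine ⟨key, ?_⟩
  intro h0 t x
  have hdiff : Differentiable ℝ G := hGs.differentiable (by simp)
  have hg : ∀ s : ℝ, HasDerivAt (fun s : ℝ => G (s, x)) 0 s := by
    intro s
    have h1 : HasDerivAt (fun s : ℝ => ((s, x) : ℝ × (Fin 3 → ℝ))) τ s := by
      rw [hτ]
      exact (hasDerivAt_id s).prodMk (hasDerivAt_const s x)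
    have h2 := (hdiff (s, x)).hasFDerivAt.comp_hasDerivAt s h1
    simpa [key (s, x), Function.comp_def] using h2
  have hconst := is_const_of_deriv_eq_zero (fun s => (hg s).differentiableAt)
    (fun s => (hg s).deriv) t 0
  rw [hconst]
  exact h0 x
end
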